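/- Every free-connex acyclic conjunctive query over a schema whose relation symbols have arity at most k has weak head arity at most k. -/

import Mathlib

/-- A relational atom (or fact): a relation symbol with a list of arguments.
Arguments are natural numbers, serving both as variables and as data values. -/
structure Atom where
  rel : ℕ
  args : List ℕ
deriving DecidableEq

/-- Apply a substitution to an atom. -/
def mapAtom (f : ℕ → ℕ) (A : Atom) : Atom := ⟨A.rel, A.args.map f⟩

/-- The variables of an atom. -/
def Atom.vars (A : Atom) : Finset ℕ := A.args.toFinset

/-- The variables of a finite set of atoms. -/
def varsOf (B : Finset Atom) : Finset ℕ := B.biUnion Atom.vars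

/-- A conjunctive query: a head atom and a finite set of body atoms. -/
structure CQ where
  head : Atom
  body : Finset Atom
deriving DecidableEq

/-- All variables of a conjunctive query. -/
def CQ.vars (Q : CQ) : Finset ℕ := Q.head.vars ∪ varsOf Q.body

/-- A schema: a set of relation symbols together with an arity function. -/
structure Schema where
  rels : Set ℕ
  ar : ℕ → ℕ

/-- An atom (or fact) over a schema. -/
def atomOver (σ : Schema) (A : Atom) : Prop :=
  A.rel ∈ σ.rels ∧ A.args.length = σ.ar A.rel

/-- `Q` is a (well-formed) conjunctive query over schema `σ`:
nonempty body of σ-atoms, head relation symbol not in σ, and safety. -/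
def isCQ (σ : Schema) (Q : CQ) : Prop :=
  Q.body.Nonempty ∧ (∀ A ∈ Q.body, atomOver σ A) ∧
  Q.head.rel ∉ σ.rels ∧ Q.head.vars ⊆ varsOf Q.body

/-- A database is a set of facts (finiteness is imposed where needed). -/
abbrev Database := Set Atom

/-- A database over a schema. -/
def isDBOver (σ : Schema) (D : Database) : Prop := ∀ F ∈ D, atomOver σ F

/-- The result of a conjunctive query on a database. -/
def evalCQ (Q : CQ) (D : Database) : Set Atom :=
  { F | ∃ ν : ℕ → ℕ, (∀ A ∈ Q.body, mapAtom ν A ∈ D) ∧ mapAtom ν Q.head = F }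

/-- Containment of conjunctive queries. -/
def containedCQ (Q1 Q2 : CQ) : Prop :=
  ∀ D : Database, D.Finite → evalCQ Q1 D ⊆ evalCQ Q2 D

/-- Equivalence of conjunctive queries. -/
def equivCQ (Q1 Q2 : CQ) : Prop :=
  ∀ D : Database, D.Finite → evalCQ Q1 D = evalCQ Q2 D

/-- A conjunctive query is minimal if no equivalent CQ has strictly fewer body atoms. -/
def isMinimal (Q : CQ) : Prop :=
  ∀ Q2 : CQ, equivCQ Q Q2 → Q.body.card ≤ Q2.body.card

/-- A homomorphism from `Q2` to `Q1`. -/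
def isHom (h : ℕ → ℕ) (Q2 Q1 : CQ) : Prop :=
  (∀ A ∈ Q2.body, mapAtom h A ∈ Q1.body) ∧ mapAtom h Q2.head = Q1.head

/-- A body homomorphism from `Q2` to `Q1`. -/
def isBodyHom (h : ℕ → ℕ) (Q2 Q1 : CQ) : Prop :=
  ∀ A ∈ Q2.body, mapAtom h A ∈ Q1.body

/-- A set of views over σ: each view is a CQ over σ and views have
pairwise distinct head relation symbols. -/
def isViewSet (σ : Schema) (𝒱 : Finset CQ) : Prop :=
  (∀ V ∈ 𝒱, isCQ σ V) ∧
  ∀ V ∈ 𝒱, ∀ W ∈ 𝒱, V ≠ W → V.head.rel ≠ W.head.rel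

/-- The 𝒱-defined database 𝒱(D). -/
def viewDB (𝒱 : Finset CQ) (D : Database) : Database :=
  ⋃ V ∈ 𝒱, evalCQ V D

/-- `Q'` is a CQ over the schema σ_𝒱 of the head relations of the views 𝒱. -/
def overViews (𝒱 : Finset CQ) (Q' : CQ) : Prop :=
  Q'.body.Nonempty ∧
  (∀ A ∈ Q'.body, ∃ V ∈ 𝒱, A.rel = V.head.rel ∧ A.args.length = V.head.args.length) ∧
  (∀ V ∈ 𝒱, Q'.head.rel ≠ V.head.rel) ∧
  Q'.head.vars ⊆ varsOf Q'.body

/-- `Q'` is a 𝒱-rewriting of `Q`: `Q'` is over σ_𝒱 and `Q'(𝒱(D)) = Q(D)`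
for every (finite) database `D` over σ. -/
def isRewriting (σ : Schema) (𝒱 : Finset CQ) (Q Q' : CQ) : Prop :=
  overViews 𝒱 Q' ∧
  ∀ D : Database, D.Finite → isDBOver σ D →
    evalCQ Q' (viewDB 𝒱 D) = evalCQ Q D

/-- `T` is a join tree for the atom set `B`. -/
def joinTreeProp (B : Finset Atom) (T : SimpleGraph {A : Atom // A ∈ B}) : Prop :=
  T.IsTree ∧
  ∀ (x : ℕ) (A A' : {A : Atom // A ∈ B}) (p : T.Walk A A'), p.IsPath →
    x ∈ A.1.vars → x ∈ A'.1.vars → ∀ C ∈ p.support, x ∈ C.1.vars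

/-- The atom set `B` has a join tree. -/
def hasJoinTree (B : Finset Atom) : Prop :=
  ∃ T : SimpleGraph {A : Atom // A ∈ B}, joinTreeProp B T

/-- A conjunctive query is acyclic if its body has a join tree. -/
def isAcyclicCQ (Q : CQ) : Prop := hasJoinTree Q.body

/-- A conjunctive query is free-connex acyclic. -/
def isFreeConnex (Q : CQ) : Prop :=
  isAcyclicCQ Q ∧ hasJoinTree (insert Q.head Q.body)

/-- The bridge variables of `𝒜 ⊆ body(Q)`. -/
def bvars (Q : CQ) (𝒜 : Finset Atom) : Finset ℕ :=
  varsOf 𝒜 ∩ (Q.head.vars ∪ varsOf (Q.body \ 𝒜))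

/-- An application of a view `V`: a substitution that does not unify any
quantified variable of `V` with another variable of `V`. -/
def isApplication (V : CQ) (α : ℕ → ℕ) : Prop :=
  ∀ x ∈ varsOf V.body, x ∉ V.head.vars →
    ∀ y ∈ CQ.vars V, y ≠ x → α x ≠ α y

/-- The query α(V). -/
def applyCQ (α : ℕ → ℕ) (V : CQ) : CQ :=
  ⟨mapAtom α V.head, V.body.image (mapAtom α)⟩

/-- `(𝒜, V, α, ψ)` is a cover description for `Q`. -/
def isCoverDesc (Q : CQ) (𝒜 : Finset Atom) (V : CQ) (α ψ : ℕ → ℕ) : Prop :=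
  𝒜 ⊆ Q.body ∧ isApplication V α ∧
  𝒜 ⊆ V.body.image (mapAtom α) ∧
  bvars Q 𝒜 ⊆ V.head.vars.image α ∧
  isBodyHom ψ (applyCQ α V) Q ∧
  ∀ x ∈ varsOf 𝒜, ψ x = x

/-- A cover partition for `Q` over `𝒱`: a collection of cover descriptions
whose atom sets partition `body(Q)`. -/
def isCoverPartition (Q : CQ) (𝒱 : Finset CQ) (m : ℕ)
    (𝒜 : Fin m → Finset Atom) (V : Fin m → CQ) (α ψ : Fin m → ℕ → ℕ) : Prop :=
  (∀ i, V i ∈ 𝒱 ∧ isCoverDesc Q (𝒜 i) (V i) (α i) (ψ i)) ∧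
  ∀ A ∈ Q.body, ∃! i, A ∈ 𝒜 i

/-- Consistency of a cover partition: a variable of any `α_j(V_j)` lies in the
range of another `α_i` only if it also lies in `bvars(𝒜_j)`. -/
def isConsistent (Q : CQ) (m : ℕ) (𝒜 : Fin m → Finset Atom) (V : Fin m → CQ)
    (α : Fin m → ℕ → ℕ) : Prop :=
  ∀ i j : Fin m, i ≠ j → ∀ z ∈ CQ.vars (applyCQ (α j) (V j)),
    (∃ x ∈ CQ.vars (V i), α i x = z) → z ∈ bvars Q (𝒜 j)

/-- The query `Q_𝒞` induced by a (consistent) cover partition. -/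
def inducedCQ (Q : CQ) (m : ℕ) (V : Fin m → CQ) (α : Fin m → ℕ → ℕ) : CQ :=
  ⟨Q.head, Finset.image (fun i => mapAtom (α i) (V i).head) Finset.univ⟩

/-- Quantified variable disjointness for a family of view applications. -/
def QVD (m : ℕ) (V : Fin m → CQ) (α : Fin m → ℕ → ℕ) : Prop :=
  ∀ i j : Fin m, i ≠ j → ∀ x ∈ varsOf (V i).body, x ∉ (V i).head.vars →
    ∀ y ∈ CQ.vars (V j), α i x ≠ α j y

/-- `QE` is an expansion of `Q'` with respect to the views `𝒱`. -/
def isExpansion (𝒱 : Finset CQ) (Q' QE : CQ) : Prop :=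
  ∃ (m : ℕ) (A' : Fin m → Atom) (V : Fin m → CQ) (α : Fin m → ℕ → ℕ),
    (∀ i, V i ∈ 𝒱 ∧ isApplication (V i) (α i) ∧ A' i = mapAtom (α i) (V i).head) ∧
    Q'.body = Finset.image A' Finset.univ ∧
    QVD m V α ∧
    QE.head = Q'.head ∧
    QE.body = Finset.biUnion Finset.univ (fun i => (V i).body.image (mapAtom (α i)))

/-- `atoms(x)`: the body atoms of `Q` containing the variable `x`. -/
def atomsWith (Q : CQ) (x : ℕ) : Finset Atom :=
  Q.body.filter (fun A => x ∈ A.vars)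

/-- Hierarchical conjunctive queries. -/
def isHierarchical (Q : CQ) : Prop :=
  ∀ x y : ℕ, atomsWith Q x ⊆ atomsWith Q y ∨ atomsWith Q y ⊆ atomsWith Q x ∨
    atomsWith Q x ∩ atomsWith Q y = ∅

/-- q-hierarchical conjunctive queries. -/
def isQHierarchical (Q : CQ) : Prop :=
  isHierarchical Q ∧ ∀ x y : ℕ, atomsWith Q x ⊂ atomsWith Q y →
    x ∈ Q.head.vars → y ∈ Q.head.vars

/-- `P` is a partition of `body(Q)` witnessing weak head arity at most `k`. -/
def witnessesWHA (Q : CQ) (k n : ℕ) (P : Fin n → Finset Atom) : Prop :=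
  (∀ i, (P i).Nonempty) ∧ (∀ i, P i ⊆ Q.body) ∧ (∀ A ∈ Q.body, ∃! i, A ∈ P i) ∧
  (∀ i, (varsOf (P i) ∩ Q.head.vars).card ≤ k) ∧
  (∀ i j, i ≠ j → ∀ x ∈ varsOf (P i), x ∈ varsOf (P j) → x ∈ Q.head.vars)

/-- `Q` has weak head arity at most `k`. -/
def hasWHAle (Q : CQ) (k : ℕ) : Prop := ∃ n P, witnessesWHA Q k n P

/-- The weak head arity of `Q`. -/
noncomputable def weakHeadArity (Q : CQ) : ℕ := sInf {k | hasWHAle Q k}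

/-- The cover graph of `Q`: vertices are the body atoms, with an edge between
two atoms iff they share a variable not occurring in the head. -/
def coverGraph (Q : CQ) : SimpleGraph {A : Atom // A ∈ Q.body} :=
  SimpleGraph.fromRel (fun A B => ∃ x, x ∈ A.1.vars ∧ x ∈ B.1.vars ∧ x ∉ Q.head.vars)

/-- A subset `s` of the atom set `B` is connected in the (join) tree `T`. -/
def connectedIn (B : Finset Atom) (T : SimpleGraph {A : Atom // A ∈ B}) (s : Finset Atom) : Prop :=
  (T.induce {A : {A : Atom // A ∈ B} | A.1 ∈ s}).Connected

/-!
Root the join tree of `body(Q) ∪ {head(Q)}` at the head and group the body atoms by the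
neighbour of the root through which the tree path reaches them. By the running-intersection
property along that path, every head variable of an atom of a group occurs in the group's
neighbour, a body atom of arity at most `k`. The tree path between atoms of different groups
passes through the head, so the variables they share are head variables.
-/

namespace SimpleGraph

variable {V : Type*} {G : SimpleGraph V}

lemma Walk.snd_concat {u v w : V} {p : G.Walk u v} (hp : ¬p.Nil) (h : G.Adj v w) :
    (p.concat h).snd = p.snd := by
  cases p with
  | nil => simp at hp
  | cons h' q => simp [Walk.concat_cons]

namespace IsTree

open Walk

noncomputable def path (hG : G.IsTree) (u v : V) : G.Walk u v :=
  (hG.existsUnique_path u v).exists.choose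

lemma isPath_path (hG : G.IsTree) (u v : V) : (hG.path u v).IsPath :=
  (hG.existsUnique_path u v).exists.choose_spec

/-- The neighbour of `r` through which the tree path from `r` reaches `v`
(`r` itself if `v = r`). -/
noncomputable def branch (hG : G.IsTree) (r v : V) : V := (hG.path r v).snd

lemma branch_mem_support_path (hG : G.IsTree) (r v : V) :
    hG.branch r v ∈ (hG.path r v).support :=
  getVert_mem_support _ _

lemma branch_ne (hG : G.IsTree) {r v : V} (hv : v ≠ r) : hG.branch r v ≠ r :=
  ((hG.path r v).adj_snd fun h => hv h.eq.symm).ne'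

lemma branch_eq_of_adj (hG : G.IsTree) {r a b : V} (ha : a ≠ r) (hb : b ≠ r) (hab : G.Adj a b) :
    hG.branch r a = hG.branch r b := by
  have hp := hG.isPath_path r a
  have hq := hG.isPath_path r b
  by_cases hsupp : a ∈ (hG.path r b).support
  · rw [branch, branch, hG.isAcyclic.path_concat hp hq hab hsupp,
      snd_concat (fun h => ha h.eq.symm)]
  · have hb_mem := hG.isAcyclic.mem_support_of_ne_mem_support_of_adj_of_isPath hp hq hab hsupp
    rw [branch, branch, hG.isAcyclic.path_concat hq hp hab.symm hb_mem,
      snd_concat (fun h => hb h.eq.symm)]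

lemma branch_eq_of_walk (hG : G.IsTree) {r a b : V} (w : G.Walk a b) (hr : r ∉ w.support) :
    hG.branch r a = hG.branch r b := by
  induction w with
  | nil => rfl
  | @cons a c b hac q ih =>
    rw [support_cons, List.mem_cons, not_or] at hr
    have hc : c ≠ r := fun h => hr.2 (h ▸ q.start_mem_support)
    exact (hG.branch_eq_of_adj (Ne.symm hr.1) hc hac).trans (ih hr.2)

lemma mem_support_path_of_branch_ne (hG : G.IsTree) {r a b : V}
    (h : hG.branch r a ≠ hG.branch r b) : r ∈ (hG.path a b).support := by
  by_contra hr
  exact h (hG.branch_eq_of_walk _ hr)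

end IsTree

end SimpleGraph

theorem hasWHAle_of_fibers {β : Type*} [DecidableEq β] (Q : CQ) (k : ℕ) (key : Atom → β)
    (hcard : ∀ A ∈ Q.body, (varsOf (Q.body.filter (key · = key A)) ∩ Q.head.vars).card ≤ k)
    (hsep : ∀ A ∈ Q.body, ∀ A' ∈ Q.body, key A ≠ key A' →
      ∀ x ∈ A.vars, x ∈ A'.vars → x ∈ Q.head.vars) :
    hasWHAle Q k := by
  set S := Q.body.image key
  let b : Fin S.card → β := fun i => S.equivFin.symm i
  have hb_image : ∀ i, ∃ A ∈ Q.body, key A = b i := fun i =>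
    Finset.mem_image.mp (S.equivFin.symm i).2
  have hb_inj : Function.Injective b := Subtype.val_injective.comp S.equivFin.symm.injective
  have mem_fiber {A i} : A ∈ Q.body.filter (key · = b i) ↔ A ∈ Q.body ∧ key A = b i :=
    Finset.mem_filter
  refine ⟨S.card, fun i => Q.body.filter (key · = b i), fun i => ?_,
    fun i => Finset.filter_subset _ _, fun A hA => ?_, fun i => ?_, fun i j hij x hxi hxj => ?_⟩
  · obtain ⟨A, hA, hAi⟩ := hb_image i
    exact ⟨A, mem_fiber.mpr ⟨hA, hAi⟩⟩
  · refine ⟨S.equivFin ⟨key A, Finset.mem_image_of_mem _ hA⟩, mem_fiber.mpr ⟨hA, ?_⟩,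
      fun j hj => hb_inj ?_⟩
    · simp [b]
    · simp [b, ← (mem_fiber.mp hj).2]
  · obtain ⟨A, hA, hAi⟩ := hb_image i
    simpa only [← hAi] using hcard A hA
  · obtain ⟨A, hA, hxA⟩ := Finset.mem_biUnion.mp hxi
    obtain ⟨A', hA', hxA'⟩ := Finset.mem_biUnion.mp hxj
    rw [mem_fiber] at hA hA'
    exact hsep A hA.1 A' hA'.1 (by rw [hA.2, hA'.2]; exact hb_inj.ne hij) x hxA hxA'

theorem hasWHAle_of_joinTreeProp_insert_head (Q : CQ) (k : ℕ)
    (hk : ∀ A ∈ Q.body, A.args.length ≤ k) {T : SimpleGraph {A // A ∈ insert Q.head Q.body}}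
    (hT : joinTreeProp (insert Q.head Q.body) T) :
    hasWHAle Q k := by
  classical
  let H : {A // A ∈ insert Q.head Q.body} := ⟨Q.head, Finset.mem_insert_self _ _⟩
  let vertex (A : Atom) : {A // A ∈ insert Q.head Q.body} :=
    if h : A ∈ insert Q.head Q.body then ⟨A, h⟩ else H
  have hvertex : ∀ A ∈ Q.body, (vertex A).1 = A := fun A hA => by
    simp only [vertex, dif_pos (Finset.mem_insert_of_mem hA)]
  let key (A : Atom) := hT.1.branch H (vertex A)
  have hkey_vars : ∀ A ∈ Q.body, ∀ x ∈ A.vars, x ∈ Q.head.vars → x ∈ (key A).1.vars :=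
    fun A hA x hxA hxH => hT.2 x H (vertex A) _ (hT.1.isPath_path _ _) hxH
      ((hvertex A hA).symm ▸ hxA) _ (hT.1.branch_mem_support_path _ _)
  have hkey_body : ∀ A ∈ Q.body, (key A).1 ∈ Q.body := by
    intro A hA
    rcases Finset.mem_insert.mp (key A).2 with hkH | hkB
    · have hAH : vertex A = H := by
        by_contra hne
        exact hT.1.branch_ne hne (Subtype.ext hkH)
      have hA_head : A = Q.head := (hvertex A hA).symm.trans (congrArg Subtype.val hAH)
      rw [hkH, ← hA_head]
      exact hA
    · exact hkB
  refine hasWHAle_of_fibers Q k key (fun A hA => ?_) fun A hA A' hA' hne x hxA hxA' => ?_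
  · have hsub : varsOf (Q.body.filter (key · = key A)) ∩ Q.head.vars ⊆ (key A).1.vars := by
      intro x hx
      obtain ⟨hx, hxH⟩ := Finset.mem_inter.mp hx
      obtain ⟨A', hA', hxA'⟩ := Finset.mem_biUnion.mp hx
      obtain ⟨hA'B, hkey⟩ := Finset.mem_filter.mp hA'
      exact hkey ▸ hkey_vars A' hA'B x hxA' hxH
    calc _ ≤ (key A).1.vars.card := Finset.card_le_card hsub
      _ ≤ (key A).1.args.length := List.toFinset_card_le _
      _ ≤ k := hk _ (hkey_body A hA)
  · exact hT.2 x (vertex A) (vertex A') _ (hT.1.isPath_path _ _) ((hvertex A hA).symm ▸ hxA)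
      ((hvertex A' hA').symm ▸ hxA') H (hT.1.mem_support_path_of_branch_ne hne)

/-- Every free-connex acyclic CQ over a schema whose relation symbols
have arity at most `k` has weak head arity at most `k`. -/
theorem statement12 (σ : Schema) (k : ℕ) (har : ∀ r ∈ σ.rels, σ.ar r ≤ k)
    (Q : CQ) (hQ : isCQ σ Q) (hfc : isFreeConnex Q) :
    weakHeadArity Q ≤ k := by
  obtain ⟨-, hatoms, -, -⟩ := hQ
  obtain ⟨-, T, hT⟩ := hfc
  refine Nat.sInf_le (hasWHAle_of_joinTreeProp_insert_head Q k (fun A hA => ?_) hT)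
  rw [(hatoms A hA).2]
  exact har _ (hatoms A hA).1
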